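/- arXiv:1612.07915 — 2 statements merged into one kernel-verified Lean document; each statement's English description precedes it below -/
import Mathlib

section
/- Let P be a nonempty polyhedral set in ℝ^d and let F be a nonempty face of P. Then the normal cone satisfies N(P,F) = ⋃_{H face of P, F ⊆ H} relint N(P,H), and this union is disjoint. -/
open RealInnerProductSpace Pointwise

noncomputable section

abbrev Euc (d : ℕ) := EuclideanSpace ℝ (Fin d)

/-- A polyhedral set: intersection of finitely many closed half-spaces. -/
def IsPolyhedral {d : ℕ} (P : Set (Euc d)) : Prop :=
  ∃ s : Finset (Euc d × ℝ), P = {x | ∀ h ∈ s, ⟪h.1, x⟫ ≤ h.2}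

/-- A (nonempty) face of a convex set: a nonempty convex extreme subset. -/
def IsFaceOf {d : ℕ} (P F : Set (Euc d)) : Prop :=
  F.Nonempty ∧ Convex ℝ F ∧ IsExtreme ℝ P F

/-- The normal cone of `P` at the face `F`. -/
def normalCone {d : ℕ} (P F : Set (Euc d)) : Set (Euc d) :=
  {u | ∀ f ∈ F, ∀ z ∈ P, ⟪u, z - f⟫ ≤ 0}

/-- The dimension of a set: the rank of the direction of its affine hull. -/
def sdim {d : ℕ} (F : Set (Euc d)) : ℕ :=
  Module.finrank ℝ (affineSpan ℝ F).direction

/-- φ_P(x) = Σ_{F face of P} (-1)^{dim F} 1_{F - N(P,F)}(x). -/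
def phi {d : ℕ} (P : Set (Euc d)) (x : Euc d) : ℤ :=
  ∑ᶠ F ∈ {F : Set (Euc d) | IsFaceOf P F},
    (-1 : ℤ) ^ sdim F * (F - normalCone P F).indicator (fun _ => (1 : ℤ)) x

/-- A set is line-free if it contains no affine line. -/
def LineFree {d : ℕ} (P : Set (Euc d)) : Prop :=
  ∀ x y : Euc d, y ≠ 0 → ∃ t : ℝ, x + t • y ∉ P

/-!
The key fact is that, for a face `H` of the polyhedron `P = {x | ⟪aⱼ, x⟫ ≤ bⱼ}`, a vector `u` lies
in the relative interior of `N(P,H)` exactly when `H` is the set of maximizers of `⟪u, ·⟫` on `P`.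
Both claims follow at once: `u ∈ N(P,F)` exposes a face containing `F`, and that face is
determined by `u`. For the key fact, `N(P,H)` is the cone generated by the normals `aⱼ` of the
constraints tight on `H` (Farkas' lemma, finitely generated cones being closed by Carathéodory's
reduction). If `u` exposes exactly `H`, Farkas' lemma once more shows that `u` can be written with
a positive coefficient on each such `aⱼ`, hence with all coefficients positive, which places it in
the relative interior. Conversely a relative interior `u` can be pushed away from each `aⱼ` inside
the cone, which forces every maximizer of `⟪u, ·⟫` to make all these constraints tight.
-/

open Set

theorem exists_pos_forall_mul_le {ι : Type*} (S : Finset ι) (f g : ι → ℝ)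
    (hg : ∀ i ∈ S, 0 < g i) : ∃ ε > (0 : ℝ), ∀ i ∈ S, ε * f i ≤ g i := by
  have hev : ∀ i ∈ S, ∀ᶠ ε in nhdsWithin (0 : ℝ) (Ioi 0), ε * f i ≤ g i := fun i hi =>
    nhdsWithin_le_nhds <| (continuous_id.mul continuous_const).tendsto' 0 0 (zero_mul _)
      |>.eventually (ge_mem_nhds (hg i hi))
  obtain ⟨ε, hle, hε⟩ := ((Filter.eventually_all_finset S).2 hev |>.and self_mem_nhdsWithin).exists
  exact ⟨ε, hε, hle⟩

section IntrinsicInterior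

variable {V : Type*} [NormedAddCommGroup V] [NormedSpace ℝ V] {C : Set V} {u v : V}

theorem mem_intrinsicInterior_iff_dist :
    u ∈ intrinsicInterior ℝ C ↔
      u ∈ affineSpan ℝ C ∧ ∃ ε > 0, ∀ z ∈ affineSpan ℝ C, dist z u < ε → z ∈ C := by
  constructor
  · rintro ⟨u, hu, rfl⟩
    obtain ⟨ε, hε, hball⟩ := Metric.mem_nhds_iff.1 (mem_interior_iff_mem_nhds.1 hu)
    exact ⟨u.2, ε, hε, fun z hz hzu => hball (show (⟨z, hz⟩ : affineSpan ℝ C) ∈ _ from hzu)⟩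
  · rintro ⟨hu, ε, hε, hball⟩
    refine ⟨⟨u, hu⟩, mem_interior_iff_mem_nhds.2 (Metric.mem_nhds_iff.2 ⟨ε, hε, ?_⟩), rfl⟩
    exact fun z hz => hball z z.2 hz

theorem exists_add_smul_sub_mem_of_mem_intrinsicInterior (hu : u ∈ intrinsicInterior ℝ C)
    (hv : v ∈ C) : ∃ ε > (0 : ℝ), u + ε • (u - v) ∈ C := by
  obtain ⟨hu_span, r, hr, hball⟩ := mem_intrinsicInterior_iff_dist.1 hu
  have hε : 0 < r / (‖u - v‖ + 1) := by positivity
  refine ⟨_, hε, hball _ ?_ ?_⟩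
  · simpa [add_comm] using
      AffineSubspace.smul_vsub_vadd_mem _ _ hu_span (subset_affineSpan ℝ C hv) hu_span
  · rw [dist_eq_norm, add_sub_cancel_left, norm_smul, Real.norm_of_nonneg hε.le]
    calc r / (‖u - v‖ + 1) * ‖u - v‖ < r / (‖u - v‖ + 1) * (‖u - v‖ + 1) := by gcongr; linarith
      _ = r := div_mul_cancel₀ _ (by positivity)

theorem Convex.mem_intrinsicInterior_of_forall_exists_add_smul_sub_mem [FiniteDimensional ℝ V]
    (hC : Convex ℝ C) (hu : u ∈ C) (h : ∀ v ∈ C, ∃ ε > (0 : ℝ), u + ε • (u - v) ∈ C) :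
    u ∈ intrinsicInterior ℝ C := by
  obtain ⟨w, hw⟩ := Set.Nonempty.intrinsicInterior hC ⟨u, hu⟩
  obtain ⟨ε, hε, hp⟩ := h w (intrinsicInterior_subset hw)
  obtain ⟨hw_span, r, hr, hball⟩ := mem_intrinsicInterior_iff_dist.1 hw
  refine mem_intrinsicInterior_iff_dist.2
    ⟨subset_affineSpan ℝ C hu, r * ε / (1 + ε), by positivity, fun z hz hzu => ?_⟩
  -- `z` is a convex combination of `u + ε • (u - w) ∈ C` and a point of `C` close to `w`
  set w' := ((1 + ε) / ε) • (z - u) + w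
  have hw' : w' ∈ C := by
    refine hball w' ?_ ?_
    · simpa using AffineSubspace.smul_vsub_vadd_mem _ ((1 + ε) / ε) hz
        (subset_affineSpan ℝ C hu) hw_span
    · rw [dist_eq_norm, add_sub_cancel_right, norm_smul, ← dist_eq_norm,
        Real.norm_of_nonneg (by positivity), div_mul_eq_mul_div, div_lt_iff₀ hε]
      rw [lt_div_iff₀ (by positivity)] at hzu
      linarith
  have hz_eq : z = (ε / (1 + ε)) • w' + (1 / (1 + ε)) • (u + ε • (u - w)) := by
    simp only [w']
    match_scalars <;> field_simp <;> ring
  rw [hz_eq]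
  exact hC hw' hp (by positivity) (by positivity) (by field_simp; ring)

end IntrinsicInterior

namespace PointedCone

section Module

variable {V : Type*} [AddCommGroup V] [Module ℝ V] {S : Finset V} {x : V}

theorem mem_hull_finset_iff :
    x ∈ hull ℝ (S : Set V) ↔ ∃ c : V → ℝ, (∀ s ∈ S, 0 ≤ c s) ∧ ∑ s ∈ S, c s • s = x := by
  constructor
  · intro hx
    obtain ⟨c, -, rfl⟩ := Submodule.mem_span_finset.1 hx
    exact ⟨fun s => c s, fun s _ => (c s).2, rfl⟩
  · rintro ⟨c, hc, rfl⟩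
    exact Submodule.sum_mem _ fun s hs => smul_mem _ (hc s hs) (subset_hull hs)

end Module

section Normed

variable {V : Type*} [NormedAddCommGroup V] [NormedSpace ℝ V] {S : Finset V}

theorem hull_finset_eq_biUnion_erase [DecidableEq V] (hS : ¬ LinearIndepOn ℝ id (S : Set V)) :
    (hull ℝ (S : Set V) : Set V) = ⋃ s ∈ S, (hull ℝ (S.erase s : Set V) : Set V) := by
  refine Subset.antisymm (fun x hx => ?_)
    (iUnion₂_subset fun s _ => Submodule.span_mono (Finset.coe_subset.2 (S.erase_subset s)))
  obtain ⟨c, hc, rfl⟩ := mem_hull_finset_iff.1 hx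
  obtain ⟨g, hg, i, hi, hgi⟩ : ∃ g : V → ℝ, ∑ s ∈ S, g s • s = 0 ∧ ∃ i ∈ S, 0 < g i := by
    obtain ⟨g, hg, i, hi, hgi⟩ := not_linearIndepOn_finset_iff.1 hS
    rcases hgi.lt_or_gt with hlt | hgt
    · exact ⟨-g, by simpa using hg, i, hi, by simpa using hlt⟩
    · exact ⟨g, hg, i, hi, hgt⟩
  -- subtract the largest multiple of the relation `g` that keeps all coefficients nonnegative
  obtain ⟨s₀, hs₀, hmin⟩ := (S.filter (0 < g ·)).exists_min_image (fun s => c s / g s)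
    ⟨i, Finset.mem_filter.2 ⟨hi, hgi⟩⟩
  obtain ⟨hs₀S, hgs₀⟩ := Finset.mem_filter.1 hs₀
  set r := c s₀ / g s₀
  have hr : 0 ≤ r := div_nonneg (hc s₀ hs₀S) hgs₀.le
  have hc' : ∀ s ∈ S, 0 ≤ c s - r * g s := by
    intro s hs
    rcases le_or_gt (g s) 0 with hgs | hgs
    · nlinarith [hc s hs]
    · have := hmin s (Finset.mem_filter.2 ⟨hs, hgs⟩)
      rw [le_div_iff₀ hgs] at this
      linarith
  refine mem_iUnion₂.2 ⟨s₀, hs₀S, mem_hull_finset_iff.2 ⟨fun s => c s - r * g s,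
    fun s hs => hc' s (Finset.mem_of_mem_erase hs), ?_⟩⟩
  rw [Finset.sum_erase _ (by simp [r, div_mul_cancel₀ _ hgs₀.ne'])]
  simp only [sub_smul, mul_smul, Finset.sum_sub_distrib, ← Finset.smul_sum, hg, smul_zero,
    sub_zero]

theorem isClosed_hull_of_linearIndepOn (hS : LinearIndepOn ℝ id (S : Set V)) :
    IsClosed (hull ℝ (S : Set V) : Set V) := by
  set T := Fintype.linearCombination ℝ ((↑) : S → V)
  have himage : (hull ℝ (S : Set V) : Set V) = T '' Ici 0 := by
    ext x
    rw [SetLike.mem_coe, Submodule.mem_span_finset']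
    constructor
    · rintro ⟨c, rfl⟩
      exact ⟨fun s => c s, fun s => (c s).2, by simp [T, Fintype.linearCombination_apply]⟩
    · rintro ⟨c, hc, rfl⟩
      exact ⟨fun s => ⟨c s, hc s⟩, by simp [T, Fintype.linearCombination_apply]⟩
  rw [himage]
  exact (T.isClosedEmbedding_of_injective (LinearMap.ker_eq_bot.2
    hS.fintypeLinearCombination_injective)).isClosedMap _ isClosed_Ici

theorem isClosed_hull_finset [FiniteDimensional ℝ V] (S : Finset V) :
    IsClosed (hull ℝ (S : Set V) : Set V) := by
  classical
  induction S using Finset.strongInduction with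
  | H S ih =>
    by_cases hS : LinearIndepOn ℝ id (S : Set V)
    · exact isClosed_hull_of_linearIndepOn hS
    · rw [hull_finset_eq_biUnion_erase hS]
      exact isClosed_biUnion_finset fun s hs => ih _ (Finset.erase_ssubset hs)

end Normed

section InnerProduct

variable {V : Type*} [NormedAddCommGroup V] [InnerProductSpace ℝ V] [FiniteDimensional ℝ V]
  {S : Finset V} {u a x : V}

theorem exists_inner_pos_of_notMem_hull_finset (hx : x ∉ hull ℝ (S : Set V)) :
    ∃ y, (∀ s ∈ S, ⟪s, y⟫ ≤ 0) ∧ 0 < ⟪x, y⟫ := by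
  obtain ⟨y, hy, hxy⟩ :=
    ProperCone.hyperplane_separation' (C := ⟨hull ℝ (S : Set V), isClosed_hull_finset S⟩) hx
  exact ⟨-y, fun s hs => by simpa using hy s (subset_hull hs), by simpa using hxy⟩

theorem sum_smul_mem_intrinsicInterior_hull {c : V → ℝ} (hc : ∀ s ∈ S, 0 < c s) :
    ∑ s ∈ S, c s • s ∈ intrinsicInterior ℝ (hull ℝ (S : Set V) : Set V) := by
  refine (hull ℝ (S : Set V)).convex.mem_intrinsicInterior_of_forall_exists_add_smul_sub_mem
    (mem_hull_finset_iff.2 ⟨c, fun s hs => (hc s hs).le, rfl⟩) fun v hv => ?_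
  obtain ⟨l, hl, rfl⟩ := mem_hull_finset_iff.1 hv
  obtain ⟨ε, hε, hεl⟩ := exists_pos_forall_mul_le S l c hc
  refine ⟨ε, hε, mem_hull_finset_iff.2 ⟨fun s => (1 + ε) * c s - ε * l s, fun s hs => ?_, ?_⟩⟩
  · nlinarith [hεl s hs, hc s hs]
  · simp only [smul_sub, Finset.smul_sum, ← Finset.sum_sub_distrib, ← Finset.sum_add_distrib]
    exact Finset.sum_congr rfl fun s _ => by module

theorem mem_intrinsicInterior_hull_of_forall_sub_smul_mem (hu : u ∈ hull ℝ (S : Set V))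
    (h : ∀ s ∈ S, ∃ δ > (0 : ℝ), u - δ • s ∈ hull ℝ (S : Set V)) :
    u ∈ intrinsicInterior ℝ (hull ℝ (S : Set V) : Set V) := by
  choose! δ hδ hmem using h
  set n : ℝ := S.card + 1
  -- averaging `u` with the points `u - δ s • s` of the cone frees a positive multiple of each `s`
  have hw : n⁻¹ • (u + ∑ s ∈ S, (u - δ s • s)) ∈ hull ℝ (S : Set V) :=
    smul_mem _ (by positivity) (add_mem hu (Submodule.sum_mem _ hmem))
  obtain ⟨l, hl, hlw⟩ := mem_hull_finset_iff.1 hw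
  have hu_eq : ∑ s ∈ S, (l s + n⁻¹ * δ s) • s = u := by
    simp only [add_smul, mul_smul, Finset.sum_add_distrib, hlw, ← Finset.smul_sum, ← smul_add,
      Finset.sum_sub_distrib, Finset.sum_const]
    have hnu : u + S.card • u = n • u := by
      simp only [n, ← Nat.cast_smul_eq_nsmul ℝ, add_smul, one_smul, add_comm]
    rw [← add_sub_assoc, sub_add_cancel, hnu, inv_smul_smul₀ (by positivity)]
  rw [← hu_eq]
  exact sum_smul_mem_intrinsicInterior_hull fun s hs => by
    have := hl s hs; have := hδ s hs; positivity

theorem exists_sub_smul_mem_hull_of_forall_inner (hu : u ∈ hull ℝ (S : Set V))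
    (h : ∀ y, (∀ s ∈ S, ⟪s, y⟫ ≤ 0) → 0 ≤ ⟪u, y⟫ → 0 ≤ ⟪a, y⟫) :
    ∃ δ > (0 : ℝ), u - δ • a ∈ hull ℝ (S : Set V) := by
  classical
  have ha : -a ∈ hull ℝ (insert (-u) S : Finset V) := by
    by_contra hna
    obtain ⟨y, hy, hay⟩ := exists_inner_pos_of_notMem_hull_finset hna
    have := h y (fun s hs => hy s (Finset.mem_insert_of_mem hs))
      (by simpa using hy (-u) (Finset.mem_insert_self _ _))
    rw [inner_neg_left] at hay
    linarith
  rw [Finset.coe_insert, Submodule.mem_span_insert] at ha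
  obtain ⟨c, w, hw, hcw⟩ := ha
  have hc : (0 : ℝ) < 1 + c := by linarith [c.2]
  refine ⟨(1 + (c : ℝ))⁻¹, inv_pos.2 hc, ?_⟩
  have hsub : u - (1 + (c : ℝ))⁻¹ • a = (1 + (c : ℝ))⁻¹ • (u + w) := by
    have ha_eq : a = (c : ℝ) • u - w := by
      rw [← neg_neg a, hcw, ← Nonneg.coe_smul]
      module
    rw [ha_eq]
    match_scalars <;> field_simp
    ring
  rw [hsub]
  exact smul_mem _ (inv_pos.2 hc).le (add_mem hu hw)

end InnerProduct

end PointedCone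

section Polyhedron

variable {V : Type*} [NormedAddCommGroup V] [InnerProductSpace ℝ V]
  {s : Finset (V × ℝ)} {H : Set V} {j : V × ℝ} {a x₀ y : V}

theorem inner_eq_of_mem_intrinsicInterior {x : V} {b : ℝ}
    (hx₀ : x₀ ∈ intrinsicInterior ℝ H) (hle : ∀ y ∈ H, ⟪a, y⟫ ≤ b) (heq : ⟪a, x₀⟫ = b)
    (hx : x ∈ H) : ⟪a, x⟫ = b := by
  obtain ⟨ε, hε, hmem⟩ := exists_add_smul_sub_mem_of_mem_intrinsicInterior hx₀ hx
  have := hle _ hmem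
  rw [inner_add_right, inner_smul_right, inner_sub_right, heq] at this
  nlinarith [hle x hx]

def polyhedron (s : Finset (V × ℝ)) : Set V :=
  {x | ∀ j ∈ s, ⟪j.1, x⟫ ≤ j.2}

open Classical in
def activeConstraints (s : Finset (V × ℝ)) (H : Set V) : Finset (V × ℝ) :=
  s.filter fun j => ∀ x ∈ H, ⟪j.1, x⟫ = j.2

open Classical in
def activeNormals (s : Finset (V × ℝ)) (H : Set V) : Finset V :=
  (activeConstraints s H).image Prod.fst

theorem mem_activeConstraints :
    j ∈ activeConstraints s H ↔ j ∈ s ∧ ∀ x ∈ H, ⟪j.1, x⟫ = j.2 := by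
  classical
  exact Finset.mem_filter

theorem mem_activeNormals : a ∈ activeNormals s H ↔ ∃ j ∈ activeConstraints s H, j.1 = a := by
  classical
  exact Finset.mem_image

theorem convex_polyhedron : Convex ℝ (polyhedron s) := by
  simp only [polyhedron, ofPred_forall]
  exact convex_iInter₂ fun j _ => convex_halfSpace_le (innerₛₗ ℝ j.1).isLinear j.2

theorem exists_pos_add_smul_mem_polyhedron (hx₀ : x₀ ∈ polyhedron s)
    (hy : ∀ j ∈ s, ⟪j.1, x₀⟫ = j.2 → ⟪j.1, y⟫ ≤ 0) :
    ∃ t > (0 : ℝ), x₀ + t • y ∈ polyhedron s := by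
  classical
  obtain ⟨t, ht, hslack⟩ := exists_pos_forall_mul_le (s.filter fun j => ⟪j.1, x₀⟫ < j.2)
    (fun j => ⟪j.1, y⟫) (fun j => j.2 - ⟪j.1, x₀⟫) fun j hj => sub_pos.2 (Finset.mem_filter.1 hj).2
  refine ⟨t, ht, fun j hj => ?_⟩
  rw [inner_add_right, inner_smul_right]
  rcases (hx₀ j hj).lt_or_eq with hlt | heq
  · linarith [hslack j (Finset.mem_filter.2 ⟨hj, hlt⟩)]
  · nlinarith [hy j hj heq]

theorem mem_activeConstraints_of_mem_intrinsicInterior (hH : H ⊆ polyhedron s)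
    (hx₀ : x₀ ∈ intrinsicInterior ℝ H) (hj : j ∈ s) (heq : ⟪j.1, x₀⟫ = j.2) :
    j ∈ activeConstraints s H :=
  mem_activeConstraints.2
    ⟨hj, fun _ hx => inner_eq_of_mem_intrinsicInterior hx₀ (fun _ hy => hH hy j hj) heq hx⟩

theorem exists_pos_add_smul_mem_polyhedron_of_mem_intrinsicInterior (hH : H ⊆ polyhedron s)
    (hx₀ : x₀ ∈ intrinsicInterior ℝ H) (hy : ∀ a ∈ activeNormals s H, ⟪a, y⟫ ≤ 0) :
    ∃ t > (0 : ℝ), x₀ + t • y ∈ polyhedron s :=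
  exists_pos_add_smul_mem_polyhedron (hH (intrinsicInterior_subset hx₀)) fun j hj heq =>
    hy j.1 (mem_activeNormals.2
      ⟨j, mem_activeConstraints_of_mem_intrinsicInterior hH hx₀ hj heq, rfl⟩)

end Polyhedron

section Face

variable {d : ℕ} {s : Finset (Euc d × ℝ)} {P F H : Set (Euc d)} {u z : Euc d}

theorem normalCone_anti (hFH : F ⊆ H) : normalCone P H ⊆ normalCone P F :=
  fun _ hu f hf => hu f (hFH hf)

theorem subset_toExposed_of_mem_normalCone (hF : F ⊆ P) (hu : u ∈ normalCone P F) :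
    F ⊆ (innerSL ℝ u).toExposed P := fun f hf =>
  ⟨hF hf, fun z hz => by simpa [inner_sub_right] using hu f hf z hz⟩

theorem isFaceOf_toExposed (hP : Convex ℝ P) (hne : ((innerSL ℝ u).toExposed P).Nonempty) :
    IsFaceOf P ((innerSL ℝ u).toExposed P) :=
  ⟨hne, ContinuousLinearMap.toExposed.isExposed.convex hP,
    ContinuousLinearMap.toExposed.isExposed.isExtreme⟩

theorem fst_mem_normalCone_of_mem_activeConstraints {j : Euc d × ℝ}
    (hj : j ∈ activeConstraints s H) : j.1 ∈ normalCone (polyhedron s) H := by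
  intro f hf z hz
  rw [mem_activeConstraints] at hj
  rw [inner_sub_right, hj.2 f hf]
  linarith [hz j hj.1]

theorem IsFaceOf.mem_of_forall_active_eq (hH : IsFaceOf (polyhedron s) H)
    (hz : z ∈ polyhedron s) (htight : ∀ j ∈ activeConstraints s H, ⟪j.1, z⟫ = j.2) : z ∈ H := by
  obtain ⟨x₀, hx₀⟩ := hH.1.intrinsicInterior hH.2.1
  -- `x₀` lies inside a segment from `z` to a point of `P` beyond `x₀`
  obtain ⟨t, ht, hw⟩ := exists_pos_add_smul_mem_polyhedron_of_mem_intrinsicInterior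
    hH.2.2.subset hx₀ (y := x₀ - z) fun a ha => by
      obtain ⟨j, hj, rfl⟩ := mem_activeNormals.1 ha
      rw [inner_sub_right, htight j hj, (mem_activeConstraints.1 hj).2 x₀
        (intrinsicInterior_subset hx₀), sub_self]
  refine hH.2.2.left_mem_of_mem_openSegment hz hw (intrinsicInterior_subset hx₀)
    ⟨t / (1 + t), 1 / (1 + t), by positivity, by positivity, by field_simp; ring, ?_⟩
  match_scalars <;> field_simp
  ring

theorem IsFaceOf.normalCone_eq_hull (hH : IsFaceOf (polyhedron s) H) :
    normalCone (polyhedron s) H = PointedCone.hull ℝ (activeNormals s H : Set (Euc d)) := by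
  refine Subset.antisymm (fun u hu => ?_) (fun u hu => ?_)
  · by_contra hnot
    obtain ⟨y, hy, huy⟩ := PointedCone.exists_inner_pos_of_notMem_hull_finset hnot
    obtain ⟨x₀, hx₀⟩ := hH.1.intrinsicInterior hH.2.1
    obtain ⟨t, ht, hmem⟩ :=
      exists_pos_add_smul_mem_polyhedron_of_mem_intrinsicInterior hH.2.2.subset hx₀ hy
    have := hu x₀ (intrinsicInterior_subset hx₀) _ hmem
    rw [add_sub_cancel_left, inner_smul_right] at this
    nlinarith
  · obtain ⟨c, hc, rfl⟩ := PointedCone.mem_hull_finset_iff.1 hu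
    intro f hf z hz
    rw [sum_inner]
    refine Finset.sum_nonpos fun a ha => ?_
    obtain ⟨j, hj, rfl⟩ := mem_activeNormals.1 ha
    rw [inner_smul_left]
    exact mul_nonpos_of_nonneg_of_nonpos (hc _ ha)
      (fst_mem_normalCone_of_mem_activeConstraints hj f hf z hz)

theorem IsFaceOf.toExposed_eq_of_mem_intrinsicInterior (hH : IsFaceOf (polyhedron s) H)
    (hu : u ∈ intrinsicInterior ℝ (normalCone (polyhedron s) H)) :
    (innerSL ℝ u).toExposed (polyhedron s) = H := by
  have hHu := subset_toExposed_of_mem_normalCone hH.2.2.subset (intrinsicInterior_subset hu)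
  refine Subset.antisymm (fun z hz => ?_) hHu
  obtain ⟨x₀, hx₀⟩ := hH.1
  have hux₀ : ⟪u, z - x₀⟫ = 0 := by
    rw [inner_sub_right, sub_eq_zero]
    exact le_antisymm (by simpa using (hHu hx₀).2 z hz.1)
      (by simpa using hz.2 x₀ (hH.2.2.subset hx₀))
  refine hH.mem_of_forall_active_eq hz.1 fun j hj =>
    le_antisymm (hz.1 j (mem_activeConstraints.1 hj).1) ?_
  obtain ⟨ε, hε, hmem⟩ := exists_add_smul_sub_mem_of_mem_intrinsicInterior hu
    (fst_mem_normalCone_of_mem_activeConstraints hj)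
  have := hmem x₀ hx₀ z hz.1
  rw [inner_add_left, real_inner_smul_left, inner_sub_left, hux₀, inner_sub_right,
    (mem_activeConstraints.1 hj).2 x₀ hx₀] at this
  nlinarith

theorem IsFaceOf.mem_intrinsicInterior_normalCone_of_toExposed_eq
    (hH : IsFaceOf (polyhedron s) H) (hu : (innerSL ℝ u).toExposed (polyhedron s) = H) :
    u ∈ intrinsicInterior ℝ (normalCone (polyhedron s) H) := by
  have huN : u ∈ normalCone (polyhedron s) H := fun f hf z hz => by
    rw [← hu] at hf
    simpa [inner_sub_right] using hf.2 z hz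
  rw [hH.normalCone_eq_hull] at huN ⊢
  refine PointedCone.mem_intrinsicInterior_hull_of_forall_sub_smul_mem huN fun a ha => ?_
  obtain ⟨j, hj, rfl⟩ := mem_activeNormals.1 ha
  refine PointedCone.exists_sub_smul_mem_hull_of_forall_inner huN fun y hy huy => ?_
  -- a small step from a relative interior point of `H` along `y` stays in `P` and maximizes `u`,
  -- hence stays in `H`, where `j` is tight
  obtain ⟨x₀, hx₀⟩ := hH.1.intrinsicInterior hH.2.1
  have hx₀H := intrinsicInterior_subset hx₀
  obtain ⟨t, ht, hmem⟩ :=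
    exists_pos_add_smul_mem_polyhedron_of_mem_intrinsicInterior hH.2.2.subset hx₀ hy
  have hmemH : x₀ + t • y ∈ H := by
    rw [← hu] at hx₀H ⊢
    refine ⟨hmem, fun w hw => (hx₀H.2 w hw).trans ?_⟩
    simp only [innerSL_apply_apply, inner_add_right, inner_smul_right]
    nlinarith
  have htight := (mem_activeConstraints.1 hj).2
  have := htight _ hmemH
  rw [inner_add_right, inner_smul_right, htight x₀ hx₀H] at this
  nlinarith

theorem IsFaceOf.mem_intrinsicInterior_normalCone_iff (hH : IsFaceOf (polyhedron s) H) :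
    u ∈ intrinsicInterior ℝ (normalCone (polyhedron s) H) ↔
      (innerSL ℝ u).toExposed (polyhedron s) = H :=
  ⟨hH.toExposed_eq_of_mem_intrinsicInterior, hH.mem_intrinsicInterior_normalCone_of_toExposed_eq⟩

end Face

theorem normalCone_eq_disjoint_union_relint_general {d : ℕ} (P F : Set (Euc d))
    (hP : IsPolyhedral P) (hF : IsFaceOf P F) :
    (normalCone P F =
      ⋃ H ∈ {H : Set (Euc d) | IsFaceOf P H ∧ F ⊆ H},
        intrinsicInterior ℝ (normalCone P H)) ∧
    (∀ H₁ H₂ : Set (Euc d), IsFaceOf P H₁ → F ⊆ H₁ → IsFaceOf P H₂ → F ⊆ H₂ →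
      H₁ ≠ H₂ →
      Disjoint (intrinsicInterior ℝ (normalCone P H₁))
        (intrinsicInterior ℝ (normalCone P H₂))) := by
  obtain ⟨s, rfl⟩ := hP
  refine ⟨Subset.antisymm (fun u hu => ?_) ?_, ?_⟩
  · have hFu := subset_toExposed_of_mem_normalCone hF.2.2.subset hu
    have hface := isFaceOf_toExposed convex_polyhedron (hF.1.mono hFu)
    exact mem_biUnion ⟨hface, hFu⟩ (hface.mem_intrinsicInterior_normalCone_iff.2 rfl)
  · exact iUnion₂_subset fun H hH => intrinsicInterior_subset.trans (normalCone_anti hH.2)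
  · intro H₁ H₂ hH₁ _ hH₂ _ hne
    exact disjoint_left.2 fun u hu₁ hu₂ => hne <|
      (hH₁.mem_intrinsicInterior_normalCone_iff.1 hu₁).symm.trans
        (hH₂.mem_intrinsicInterior_normalCone_iff.1 hu₂)

theorem normalCone_eq_disjoint_union_relint {d : ℕ} (P F : Set (Euc d))
    (hP : IsPolyhedral P) (hne : P.Nonempty) (hF : IsFaceOf P F) :
    (normalCone P F =
      ⋃ H ∈ {H : Set (Euc d) | IsFaceOf P H ∧ F ⊆ H},
        intrinsicInterior ℝ (normalCone P H)) ∧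
    (∀ H₁ H₂ : Set (Euc d), IsFaceOf P H₁ → F ⊆ H₁ → IsFaceOf P H₂ → F ⊆ H₂ →
      H₁ ≠ H₂ →
      Disjoint (intrinsicInterior ℝ (normalCone P H₁))
        (intrinsicInterior ℝ (normalCone P H₂))) :=
  normalCone_eq_disjoint_union_relint_general P F hP hF
end
end

section
/- Let P be a polyhedral set in ℝ^d and let W be a polytope such that the interior of W meets the relative interior of a face F of P. Then F ∩ W is a face of P ∩ W and N(P, F) = N(P ∩ W, F ∩ W). -/
open RealInnerProductSpace Pointwise

noncomputable section

/-! Pick `x₀` in `relint F ∩ int W`. A vector normal to `Pp ∩ W` at `x₀` is normal to `Pp` at `x₀`: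
since `Pp` is convex and `W` is a neighbourhood of `x₀`, every segment from `x₀` into `Pp` starts
inside `Pp ∩ W`. A vector normal to `Pp` at a relative interior point of `F` is orthogonal to `F`,
because segments in `F` can be prolonged beyond `x₀`, so it is normal to `Pp` along all of `F`. -/

open Filter Topology Set

lemma IsPolyhedral.convex {d : ℕ} {P : Set (Euc d)} (hP : IsPolyhedral P) : Convex ℝ P := by
  obtain ⟨s, rfl⟩ := hP
  have hs : {x | ∀ h ∈ s, ⟪h.1, x⟫ ≤ h.2} = ⋂ h ∈ s, {x | innerₛₗ ℝ h.1 x ≤ h.2} := by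
    ext; simp
  rw [hs]
  exact convex_iInter₂ fun h _ => convex_halfSpace_le (innerₛₗ ℝ h.1).isLinear h.2

theorem IsExtreme.inter_right {𝕜 E : Type*} [Semiring 𝕜] [PartialOrder 𝕜] [AddCommMonoid E]
    [SMul 𝕜 E] {A B : Set E} (h : IsExtreme 𝕜 A B) (C : Set E) :
    IsExtreme 𝕜 (A ∩ C) (B ∩ C) :=
  ⟨inter_subset_inter_left C h.1, fun _ hx₁ _ hx₂ _ hx hseg =>
    ⟨h.2 hx₁.1 hx₂.1 hx.1 hseg, hx₁.2⟩⟩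

section Intrinsic

variable {E : Type*} [AddCommGroup E] [Module ℝ E] [TopologicalSpace E]
  [IsTopologicalAddGroup E] [ContinuousSMul ℝ E]

theorem exists_add_smul_sub_mem_of_mem_intrinsicInterior_s10 {F : Set E} {x₀ f : E}
    (hx₀ : x₀ ∈ intrinsicInterior ℝ F) (hf : f ∈ F) :
    ∃ δ : ℝ, 0 < δ ∧ x₀ + δ • (x₀ - f) ∈ F := by
  obtain ⟨y, hy, rfl⟩ := mem_intrinsicInterior.mp hx₀
  have hmem (δ : ℝ) : (y : E) + δ • ((y : E) - f) ∈ affineSpan ℝ F := by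
    simpa [add_comm] using AffineSubspace.smul_vsub_vadd_mem (affineSpan ℝ F) δ y.2
      (subset_affineSpan ℝ F hf) y.2
  let c : ℝ → affineSpan ℝ F := fun δ => ⟨_, hmem δ⟩
  have hc : Continuous c := by fun_prop
  have hc0 : c 0 = y := by ext; simp [c]
  have hnear : ∀ᶠ δ in 𝓝 (0 : ℝ), c δ ∈ interior ((↑) ⁻¹' F) :=
    hc.continuousAt.eventually_mem (hc0 ▸ isOpen_interior.mem_nhds hy)
  obtain ⟨δ, hδ, hδpos⟩ :=
    ((hnear.filter_mono nhdsWithin_le_nhds).and (self_mem_nhdsWithin (s := Ioi 0))).exists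
  exact ⟨δ, hδpos, (interior_subset hδ : c δ ∈ ((↑) ⁻¹' F : Set (affineSpan ℝ F)))⟩

end Intrinsic

section Inner

variable {E : Type*} [NormedAddCommGroup E] [InnerProductSpace ℝ E]

theorem inner_sub_eq_zero_of_mem_intrinsicInterior {F : Set E} {x₀ f u : E}
    (hx₀ : x₀ ∈ intrinsicInterior ℝ F) (hf : f ∈ F) (hu : ∀ z ∈ F, ⟪u, z - x₀⟫ ≤ 0) :
    ⟪u, f - x₀⟫ = 0 := by
  obtain ⟨δ, hδ, hmem⟩ := exists_add_smul_sub_mem_of_mem_intrinsicInterior_s10 hx₀ hf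
  have hbeyond := hu _ hmem
  rw [add_sub_cancel_left, real_inner_smul_right, ← neg_sub, inner_neg_right] at hbeyond
  exact le_antisymm (hu f hf) (neg_nonpos.mp (nonpos_of_mul_nonpos_right hbeyond hδ))

theorem inner_sub_nonpos_of_inter_mem_nhds {P W : Set E} (hP : Convex ℝ P) {x₀ u : E}
    (hx₀ : x₀ ∈ P) (hW : W ∈ 𝓝 x₀) (hu : ∀ z ∈ P ∩ W, ⟪u, z - x₀⟫ ≤ 0) :
    ∀ z ∈ P, ⟪u, z - x₀⟫ ≤ 0 := by
  intro z hz
  have hseg : Tendsto (fun t : ℝ => x₀ + t • (z - x₀)) (𝓝 0) (𝓝 x₀) := by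
    simpa using ((tendsto_id (x := 𝓝 (0 : ℝ))).smul_const (z - x₀)).const_add x₀
  obtain ⟨t, ⟨htW, ht1⟩, ht0⟩ :=
    (((hseg.eventually_mem hW).and (Iio_mem_nhds one_pos)).filter_mono nhdsWithin_le_nhds
      |>.and (self_mem_nhdsWithin (s := Ioi 0))).exists
  have hmem := hu _ ⟨hP.add_smul_sub_mem hx₀ hz ⟨ht0.le, ht1.le⟩, htW⟩
  rw [add_sub_cancel_left, real_inner_smul_right] at hmem
  exact nonpos_of_mul_nonpos_right hmem ht0

end Inner

theorem normalCone_anti_s10 {d : ℕ} {P P' F F' : Set (Euc d)} (hP : P' ⊆ P) (hF : F' ⊆ F) :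
    normalCone P F ⊆ normalCone P' F' :=
  fun _ hu f hf z hz => hu f (hF hf) z (hP hz)

theorem mem_normalCone_iff_of_mem_intrinsicInterior {d : ℕ} {P F : Set (Euc d)} {x₀ u : Euc d}
    (hFP : F ⊆ P) (hx₀ : x₀ ∈ intrinsicInterior ℝ F) :
    u ∈ normalCone P F ↔ ∀ z ∈ P, ⟪u, z - x₀⟫ ≤ 0 := by
  refine ⟨fun hu z hz => hu x₀ (intrinsicInterior_subset hx₀) z hz, fun hu f hf z hz => ?_⟩
  have hf₀ := inner_sub_eq_zero_of_mem_intrinsicInterior hx₀ hf fun z hz => hu z (hFP hz)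
  calc ⟪u, z - f⟫ = ⟪u, z - x₀⟫ - ⟪u, f - x₀⟫ := by
        rw [← inner_sub_right, sub_sub_sub_cancel_right]
    _ ≤ 0 := by rw [hf₀, sub_zero]; exact hu z hz

theorem normalCone_intersect_polytope_general {d : ℕ} (Pp W F : Set (Euc d))
    (hP : IsPolyhedral Pp) (hW : IsPolyhedral W)
    (hF : IsFaceOf Pp F)
    (hmeet : (intrinsicInterior ℝ F ∩ interior W).Nonempty) :
    IsFaceOf (Pp ∩ W) (F ∩ W) ∧ normalCone Pp F = normalCone (Pp ∩ W) (F ∩ W) := by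
  obtain ⟨x₀, hx₀F, hx₀W⟩ := hmeet
  obtain ⟨-, hFconv, hFext⟩ := hF
  have hx₀ : x₀ ∈ F ∩ W := ⟨intrinsicInterior_subset hx₀F, interior_subset hx₀W⟩
  refine ⟨⟨⟨x₀, hx₀⟩, hFconv.inter hW.convex, hFext.inter_right W⟩,
    (normalCone_anti_s10 inter_subset_left inter_subset_left).antisymm fun u hu => ?_⟩
  rw [mem_normalCone_iff_of_mem_intrinsicInterior hFext.1 hx₀F]
  exact inner_sub_nonpos_of_inter_mem_nhds hP.convex (hFext.1 hx₀.1)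
    (mem_interior_iff_mem_nhds.mp hx₀W) fun z hz => hu x₀ hx₀ z hz

theorem normalCone_intersect_polytope {d : ℕ} (Pp W F : Set (Euc d))
    (hP : IsPolyhedral Pp) (hW : IsPolyhedral W) (hWb : Bornology.IsBounded W)
    (hF : IsFaceOf Pp F)
    (hmeet : (intrinsicInterior ℝ F ∩ interior W).Nonempty) :
    IsFaceOf (Pp ∩ W) (F ∩ W) ∧ normalCone Pp F = normalCone (Pp ∩ W) (F ∩ W) :=
  normalCone_intersect_polytope_general Pp W F hP hW hF hmeet
end
end
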